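/- Let x : Σⁿ → I ×_f Mⁿ be an isometric immersion of a hypersurface into a warped product with unit normal N, shape operator A, mean curvature H, height function h = π_I ∘ x, and ℋ(t) = f'(t)/f(t). At points where ∇h ≠ 0 and p > 1, Δₚh = ⟨N,∂t⟩(nH + (p-2)|∇h|⁻²⟨A(∇h),∇h⟩)|∇h|^(p-2) + ℋ(h)(n + p - 2 - (p-1)|∇h|²)|∇h|^(p-2). -/

import Mathlib

open scoped RealInnerProductSpace

lemma trace_rankOne {V : Type*} [NormedAddCommGroup V] [InnerProductSpace ℝ V]
    [FiniteDimensional ℝ V] (g : V) :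
    LinearMap.trace ℝ V ((LinearMap.toSpanSingleton ℝ V g).comp (innerSL ℝ g).toLinearMap)
      = ‖g‖ ^ 2 := by
  let b := stdOrthonormalBasis ℝ V
  rw [LinearMap.trace_eq_matrix_trace ℝ b.toBasis, Matrix.trace]
  simp only [Matrix.diag_apply, LinearMap.toMatrix_apply, b.coe_toBasis, b.coe_toBasis_repr_apply,
    b.repr_apply_apply]
  simp only [LinearMap.comp_apply, LinearMap.toSpanSingleton_apply, ContinuousLinearMap.coe_coe,
    innerSL_apply_apply, inner_smul_right]
  rw [← real_inner_self_eq_norm_sq]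
  exact b.sum_inner_mul_inner g g


/-- Lemma 4.1, pointwise form. At a point of a hypersurface `Σⁿ` of a warped product
`I ×_f Mⁿ`, with tangent space `V` (`n = dim V`), gradient `g = ∇h` of the height
function, shape operator `A` with `n·H = tr A`, angle function value `θ = ⟨N,∂t⟩`
satisfying `|g|² = 1 - θ²`, warping value `𝓗 = ℋ(h)`, and Hessian of `h` given by
`Hess X = θ·A X + ℋ(h)(X - ⟪X,g⟫g)`, the `p`-Laplacian
`Δₚh = |g|^(p-2)(Δh + (p-2)⟪Hess g, g⟫/|g|²)` (with `Δh = tr Hess`) equals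
`θ(nH + (p-2)|g|⁻²⟪A g,g⟫)|g|^(p-2) + ℋ(h)(n + p - 2 - (p-1)|g|²)|g|^(p-2)`. -/
theorem pLaplacian_height_function {V : Type*} [NormedAddCommGroup V]
    [InnerProductSpace ℝ V] [FiniteDimensional ℝ V]
    (n : ℕ) (hn : n = Module.finrank ℝ V)
    (p H θ 𝓗 : ℝ) (hp : 1 < p)
    (g : V) (hg : g ≠ 0) (hg2 : ‖g‖ ^ 2 = 1 - θ ^ 2)
    (A Hess : V →ₗ[ℝ] V)
    (hH : (n : ℝ) * H = LinearMap.trace ℝ V A)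
    (hHess : ∀ X, Hess X = θ • A X + 𝓗 • (X - ⟪X, g⟫ • g)) :
    ‖g‖ ^ (p - 2) * (LinearMap.trace ℝ V Hess + (p - 2) * ⟪Hess g, g⟫ / ‖g‖ ^ 2)
      = θ * ((n : ℝ) * H + (p - 2) * (‖g‖ ^ 2)⁻¹ * ⟪A g, g⟫) * ‖g‖ ^ (p - 2)
        + 𝓗 * ((n : ℝ) + p - 2 - (p - 1) * ‖g‖ ^ 2) * ‖g‖ ^ (p - 2) := by
  have hs : (‖g‖ : ℝ) ^ 2 ≠ 0 := pow_ne_zero 2 (norm_ne_zero_iff.mpr hg)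
  have hform : Hess = θ • A + 𝓗 • (LinearMap.id -
      (LinearMap.toSpanSingleton ℝ V g).comp (innerSL ℝ g).toLinearMap) := by
    ext X
    simp only [hHess X, LinearMap.add_apply, LinearMap.smul_apply, LinearMap.sub_apply,
      LinearMap.id_apply, LinearMap.comp_apply, LinearMap.toSpanSingleton_apply,
      ContinuousLinearMap.coe_coe, innerSL_apply_apply, real_inner_comm g X]
  have htr : LinearMap.trace ℝ V Hess = θ * LinearMap.trace ℝ V A + 𝓗 * ((n : ℝ) - ‖g‖ ^ 2) := by
    rw [hform, map_add, map_smul, map_smul, map_sub, trace_rankOne, LinearMap.trace_id, ← hn, smul_eq_mul, smul_eq_mul]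
  have hinner : ⟪Hess g, g⟫ = θ * ⟪A g, g⟫ + 𝓗 * (‖g‖ ^ 2 - ‖g‖ ^ 2 * ‖g‖ ^ 2) := by
    rw [hHess g, inner_add_left, real_inner_smul_left, real_inner_smul_left, inner_sub_left,
      real_inner_smul_left, real_inner_self_eq_norm_sq]
  rw [htr, hinner, hH]
  field_simp
  ring
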